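/- Let $(T_r)_{r \geq 0}$ be a decreasing sequence of measurable sets with $0 < \mu(T_r) < \infty$, and let $g \in L^2$, $x$ a point, $\nu \geq 1$. Then $\int_{T_0} (g(x)-g(p))^2 d\mu(p) \leq \frac{2\mu(T_0)}{\mu(T_\nu)} \int_{T_\nu} (g(x)-g(p))^2 d\mu(p) + \sum_{r=0}^{\nu-1} 2^{r+2} \frac{\mu(T_0)}{\mu(T_r)\mu(T_{r+1})} \int_{T_r}\int_{T_{r+1}} (g(p)-g(q))^2 d\mu(p) d\mu(q)$. -/

import Mathlib

/-!
Write `m r` and `V r` for the mean and the variance of `g` on `T r` with respect to the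
normalized measure. Each integral of the inequality splits into a bias and a variance part:
`⨍_{T r} (a - g)² = (a - m r)² + V r` and
`⨍_{T r} ⨍_{T (r+1)} (g p - g q)² = (m r - m (r+1))² + V r + V (r+1)`.
The claim thus reduces to the chain inequality for the means, which follows from the telescoping
identity `a - m 0 = (a - m ν) + ∑ (m (r+1) - m r)` and Cauchy–Schwarz with weights `2^{-(r+1)}`,
together with `V 0 ≤ 4 (V 0 + V 1)`.
-/

open MeasureTheory Finset

theorem sq_sum_le_sum_two_pow_mul_sq (u : ℕ → ℝ) (n : ℕ) :
    (∑ r ∈ range n, u r) ^ 2 ≤ ∑ r ∈ range n, 2 ^ (r + 1) * u r ^ 2 := by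
  have hweights : ∑ r ∈ range n, (1 / 2 : ℝ) ^ (r + 1) ≤ 1 := by
    simp_rw [pow_succ, ← sum_mul]
    linarith [sum_geometric_two_le n]
  calc (∑ r ∈ range n, u r) ^ 2
      ≤ (∑ r ∈ range n, (1 / 2 : ℝ) ^ (r + 1)) * ∑ r ∈ range n, 2 ^ (r + 1) * u r ^ 2 :=
        sum_sq_le_sum_mul_sum_of_sq_le_mul _ (fun _ _ => by positivity)
          (fun _ _ => by positivity) fun r _ => by
            rw [← mul_assoc, ← mul_pow]; norm_num
    _ ≤ ∑ r ∈ range n, 2 ^ (r + 1) * u r ^ 2 :=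
        mul_le_of_le_one_left (sum_nonneg fun _ _ => by positivity) hweights

theorem sq_sub_le_two_mul_sq_add_sum (a : ℝ) (m : ℕ → ℝ) (ν : ℕ) :
    (a - m 0) ^ 2 ≤
      2 * (a - m ν) ^ 2 + ∑ r ∈ range ν, 2 ^ (r + 2) * (m r - m (r + 1)) ^ 2 := by
  have htelescope : a - m 0 = (a - m ν) + ∑ r ∈ range ν, (m (r + 1) - m r) := by
    rw [sum_range_sub]; ring
  have hdouble : 2 * ∑ r ∈ range ν, 2 ^ (r + 1) * (m (r + 1) - m r) ^ 2 =
      ∑ r ∈ range ν, 2 ^ (r + 2) * (m r - m (r + 1)) ^ 2 := by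
    rw [mul_sum]; congr 1 with r; ring
  rw [htelescope]
  linarith [add_sq_le (a := a - m ν) (b := ∑ r ∈ range ν, (m (r + 1) - m r)),
    sq_sum_le_sum_two_pow_mul_sq (fun r => m (r + 1) - m r) ν]

theorem sq_sub_add_le_two_mul_add_sum {a : ℝ} {m V : ℕ → ℝ} (hV : ∀ r, 0 ≤ V r) {ν : ℕ}
    (hν : 1 ≤ ν) :
    (a - m 0) ^ 2 + V 0 ≤ 2 * ((a - m ν) ^ 2 + V ν) +
      ∑ r ∈ range ν, 2 ^ (r + 2) * ((m r - m (r + 1)) ^ 2 + V r + V (r + 1)) := by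
  have hsplit : ∑ r ∈ range ν, (2 : ℝ) ^ (r + 2) * ((m r - m (r + 1)) ^ 2 + V r + V (r + 1)) =
      ∑ r ∈ range ν, 2 ^ (r + 2) * (m r - m (r + 1)) ^ 2 +
        ∑ r ∈ range ν, 2 ^ (r + 2) * (V r + V (r + 1)) := by
    rw [← sum_add_distrib]; congr 1 with r; ring
  have hV0 : 4 * (V 0 + V 1) ≤ ∑ r ∈ range ν, (2 : ℝ) ^ (r + 2) * (V r + V (r + 1)) := by
    have h := single_le_sum (f := fun r => (2 : ℝ) ^ (r + 2) * (V r + V (r + 1)))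
      (fun r _ => mul_nonneg (by positivity) (add_nonneg (hV r) (hV (r + 1))))
      (mem_range.2 hν)
    norm_num at h
    exact h
  rw [hsplit]
  linarith [sq_sub_le_two_mul_sq_add_sum a m ν, hV 0, hV 1, hV ν]

namespace MeasureTheory

variable {X : Type*} [MeasurableSpace X]

noncomputable def averageVariance (μ : Measure X) (g : X → ℝ) : ℝ :=
  ⨍ p, (g p - ⨍ q, g q ∂μ) ^ 2 ∂μ

theorem averageVariance_nonneg (μ : Measure X) (g : X → ℝ) : 0 ≤ averageVariance μ g := by
  rw [averageVariance, average_eq, smul_eq_mul]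
  exact mul_nonneg (by positivity) (integral_nonneg fun _ => sq_nonneg _)

variable {μ ν : Measure X} [IsFiniteMeasure μ] [IsFiniteMeasure ν] {g : X → ℝ}

theorem integral_sq_sub_eq (hg : MemLp g 2 μ) (a : ℝ) :
    ∫ p, (a - g p) ^ 2 ∂μ = μ.real Set.univ * ((a - ⨍ p, g p ∂μ) ^ 2 + averageVariance μ g) := by
  set m := ⨍ p, g p ∂μ
  have hexpand : ∀ p, (a - g p) ^ 2 = (a - m) ^ 2 + (2 * (a - m) * (m - g p) + (g p - m) ^ 2) :=
    fun p => by ring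
  have hcross : Integrable (fun p => 2 * (a - m) * (m - g p)) μ :=
    ((integrable_const m).sub (hg.integrable one_le_two)).const_mul _
  have hsq : Integrable (fun p => (g p - m) ^ 2) μ := (hg.sub (memLp_const m)).integrable_sq
  have hrest : Integrable (fun p => 2 * (a - m) * (m - g p) + (g p - m) ^ 2) μ := hcross.add hsq
  simp_rw [hexpand]
  rw [integral_add (integrable_const _) hrest, integral_add hcross hsq,
    integral_const_mul, integral_average_sub (hg.integrable one_le_two), integral_const,
    smul_eq_mul, ← measure_smul_average, smul_eq_mul, averageVariance]
  ring

theorem integral_integral_sq_sub_eq (hgμ : MemLp g 2 μ) (hgν : MemLp g 2 ν) :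
    ∫ p, ∫ q, (g p - g q) ^ 2 ∂ν ∂μ = μ.real Set.univ * ν.real Set.univ *
      ((⨍ p, g p ∂μ - ⨍ q, g q ∂ν) ^ 2 + averageVariance μ g + averageVariance ν g) := by
  have hinner : ∀ p, ∫ q, (g p - g q) ^ 2 ∂ν =
      ν.real Set.univ * ((⨍ q, g q ∂ν - g p) ^ 2 + averageVariance ν g) := fun p => by
    rw [integral_sq_sub_eq hgν, sub_sq_comm]
  have hsq : Integrable (fun p => (⨍ q, g q ∂ν - g p) ^ 2) μ :=
    ((memLp_const _).sub hgμ).integrable_sq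
  simp_rw [hinner]
  rw [integral_const_mul, integral_add hsq (integrable_const _),
    integral_sq_sub_eq hgμ, integral_const, smul_eq_mul]
  ring

end MeasureTheory

theorem stmt_7_general {X : Type*} [MeasurableSpace X] (μ : Measure X)
    (T : ℕ → Set X)
    (hT0 : ∀ r, 0 < μ (T r)) (hT1 : ∀ r, μ (T r) < ⊤)
    (g : X → ℝ) (hg : MemLp g 2 μ) (x : X) (ν : ℕ) (hν : 1 ≤ ν) :
    ∫ p in T 0, (g x - g p) ^ 2 ∂μ ≤
      (2 * (μ (T 0)).toReal / (μ (T ν)).toReal) *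
        (∫ p in T ν, (g x - g p) ^ 2 ∂μ) +
      ∑ r ∈ Finset.range ν,
        2 ^ (r + 2) * ((μ (T 0)).toReal / ((μ (T r)).toReal * (μ (T (r + 1))).toReal)) *
          ∫ p in T r, ∫ q in T (r + 1), (g p - g q) ^ 2 ∂μ ∂μ := by
  have : ∀ r, IsFiniteMeasure (μ.restrict (T r)) := fun r => isFiniteMeasure_restrict.2 (hT1 r).ne
  have hgT : ∀ r, MemLp g 2 (μ.restrict (T r)) := fun r => hg.restrict (T r)
  simp only [← measureReal_def]
  rw [integral_sq_sub_eq (hgT 0), integral_sq_sub_eq (hgT ν)]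
  simp_rw [integral_integral_sq_sub_eq (hgT _) (hgT _), measureReal_restrict_apply_univ]
  have hc : ∀ r, μ.real (T r) ≠ 0 := fun r => (ENNReal.toReal_pos (hT0 r).ne' (hT1 r).ne).ne'
  have hchain := mul_le_mul_of_nonneg_left (sq_sub_add_le_two_mul_add_sum (a := g x)
    (m := fun r => ⨍ p in T r, g p ∂μ) (V := fun r => averageVariance (μ.restrict (T r)) g)
    (fun r => averageVariance_nonneg _ _) hν) (measureReal_nonneg (μ := μ) (s := T 0))
  refine hchain.trans_eq ?_
  rw [mul_add, mul_sum]
  congr 1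
  · field_simp [hc ν]
  · refine sum_congr rfl fun r _ => ?_
    field_simp [hc r, hc (r + 1)]

theorem stmt_7 {X : Type*} [MeasurableSpace X] (μ : Measure X)
    (T : ℕ → Set X) (hTmeas : ∀ r, MeasurableSet (T r))
    (hTanti : ∀ r, T (r + 1) ⊆ T r)
    (hT0 : ∀ r, 0 < μ (T r)) (hT1 : ∀ r, μ (T r) < ⊤)
    (g : X → ℝ) (hg : MemLp g 2 μ) (x : X) (ν : ℕ) (hν : 1 ≤ ν) :
    ∫ p in T 0, (g x - g p) ^ 2 ∂μ ≤
      (2 * (μ (T 0)).toReal / (μ (T ν)).toReal) *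
        (∫ p in T ν, (g x - g p) ^ 2 ∂μ) +
      ∑ r ∈ Finset.range ν,
        2 ^ (r + 2) * ((μ (T 0)).toReal / ((μ (T r)).toReal * (μ (T (r + 1))).toReal)) *
          ∫ p in T r, ∫ q in T (r + 1), (g p - g q) ^ 2 ∂μ ∂μ :=
  stmt_7_general μ T hT0 hT1 g hg x ν hν
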